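/- arXiv:1009.5329 — 9 statements merged into one kernel-verified Lean document; each statement's English description precedes it below -/
import Mathlib

section
/- The double integral (1/(4π)) ∫_{κ=0}^{π/2} ∫_{ρ=π/2−κ}^{π/2} sin(κ+ρ)·sin(κ)·sin(ρ) / √(−4·cos(κ)·cos(ρ)·cos(κ+ρ)) dρ dκ equals 3√2/32. -/
/-!
Substituting `ρ = (ψ + π - κ) / 2` turns the inner integral into `½ ∫_{-κ}^{κ} g(cos ψ, κ) dψ` with
`g(w, κ) = sin κ (cos κ + w) / (2 √(2 cos κ (w - cos κ)))`. On the triangle `|ψ| < κ < π/2` this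
integrand is nonnegative, so Tonelli and Fubini let us integrate in `κ` first. There `g(w, ·)` has
the elementary primitive `(√2/4) (√(cos κ (w - cos κ)) - (3w/2) arcsin (2 cos κ / w - 1))`, which
gives `∫_{|ψ|}^{π/2} g(cos ψ, κ) dκ = 3√2 π cos ψ / 8`; integrating over `ψ ∈ (-π/2, π/2)` yields
`3√2 π / 4`, and the factor `1 / (8π)` gives `3√2 / 32`.
-/

open Real MeasureTheory Set Function

section Triangle

variable {a : ℝ} {f : ℝ → ℝ → ℝ}

def triangle (a : ℝ) : Set (ℝ × ℝ) := {p | p.1 ∈ Ioo |p.2| a}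

lemma measurableSet_triangle : MeasurableSet (triangle a) :=
  ((isOpen_lt (continuous_abs.comp continuous_snd) continuous_fst).inter
    (isOpen_lt continuous_fst continuous_const)).measurableSet

lemma Ioo_abs_eq_empty {ψ : ℝ} (hψ : ψ ∉ Ioo (-a) a) : Ioo |ψ| a = ∅ :=
  Ioo_eq_empty (by rwa [mem_Ioo, ← abs_lt] at hψ)

lemma indicator_triangle_apply (κ ψ : ℝ) :
    (triangle a).indicator (uncurry f) (κ, ψ) = (Ioo |ψ| a).indicator (f · ψ) κ := by
  simp only [indicator_apply, triangle, mem_ofPred_eq, uncurry_apply_pair]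

lemma indicator_triangle_apply_of_mem {κ : ℝ} (hκ : κ ∈ Ioo 0 a) (ψ : ℝ) :
    (triangle a).indicator (uncurry f) (κ, ψ) = (Ioo (-κ) κ).indicator (f κ) ψ := by
  simp only [indicator_apply, triangle, mem_ofPred_eq, uncurry_apply_pair, mem_Ioo, ← abs_lt,
    hκ.2, and_true]

lemma indicator_triangle_apply_of_notMem {κ : ℝ} (hκ : κ ∉ Ioo 0 a) (ψ : ℝ) :
    (triangle a).indicator (uncurry f) (κ, ψ) = 0 :=
  indicator_of_notMem (fun h => hκ ⟨(abs_nonneg ψ).trans_lt h.1, h.2⟩) _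

lemma integral_indicator_triangle_left (ψ : ℝ) :
    ∫ κ, (triangle a).indicator (uncurry f) (κ, ψ) = ∫ κ in Ioo |ψ| a, f κ ψ := by
  simp_rw [indicator_triangle_apply]
  exact integral_indicator measurableSet_Ioo

lemma integrableOn_triangle_of_nonneg (hmeas : Measurable (uncurry f))
    (hnonneg : ∀ p ∈ triangle a, 0 ≤ uncurry f p)
    (hslice : ∀ ψ ∈ Ioo (-a) a, IntegrableOn (f · ψ) (Ioo |ψ| a))
    (hsliceIntegral : IntegrableOn (fun ψ => ∫ κ in Ioo |ψ| a, f κ ψ) (Ioo (-a) a)) :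
    IntegrableOn (uncurry f) (triangle a) := by
  rw [← integrable_indicator_iff measurableSet_triangle, Measure.volume_eq_prod,
    integrable_prod_iff' (hmeas.indicator measurableSet_triangle).aestronglyMeasurable]
  constructor
  · refine Filter.Eventually.of_forall fun ψ => ?_
    simp_rw [indicator_triangle_apply]
    by_cases hψ : ψ ∈ Ioo (-a) a
    · exact (hslice ψ hψ).integrable_indicator measurableSet_Ioo
    · simp [Ioo_abs_eq_empty hψ]
  · have hnorm : ∀ p,
        ‖(triangle a).indicator (uncurry f) p‖ = (triangle a).indicator (uncurry f) p :=
      fun p => norm_of_nonneg (indicator_nonneg hnonneg p)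
    simp_rw [hnorm, integral_indicator_triangle_left]
    exact hsliceIntegral.integrable_of_forall_notMem_eq_zero fun ψ hψ => by
      simp [Ioo_abs_eq_empty hψ]

lemma integral_triangle_swap (hf : IntegrableOn (uncurry f) (triangle a)) :
    ∫ κ in Ioo 0 a, ∫ ψ in Ioo (-κ) κ, f κ ψ = ∫ ψ in Ioo (-a) a, ∫ κ in Ioo |ψ| a, f κ ψ := by
  set F := (triangle a).indicator (uncurry f)
  calc ∫ κ in Ioo 0 a, ∫ ψ in Ioo (-κ) κ, f κ ψ = ∫ κ, ∫ ψ, F (κ, ψ) := by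
        rw [← integral_indicator measurableSet_Ioo]
        congr 1 with κ
        by_cases hκ : κ ∈ Ioo 0 a
        · simp_rw [indicator_of_mem hκ, F, indicator_triangle_apply_of_mem hκ]
          exact (integral_indicator measurableSet_Ioo).symm
        · simp [indicator_of_notMem hκ, F, indicator_triangle_apply_of_notMem hκ]
    _ = ∫ ψ, ∫ κ, F (κ, ψ) := by
        exact integral_integral_swap ((integrable_indicator_iff measurableSet_triangle).2 hf)
    _ = ∫ ψ in Ioo (-a) a, ∫ κ in Ioo |ψ| a, f κ ψ := by
        rw [← integral_indicator measurableSet_Ioo]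
        congr 1 with ψ
        rw [integral_indicator_triangle_left]
        by_cases hψ : ψ ∈ Ioo (-a) a
        · rw [indicator_of_mem hψ]
        · simp [indicator_of_notMem hψ, Ioo_abs_eq_empty hψ]

end Triangle

noncomputable def reducedIntegrand (w κ : ℝ) : ℝ :=
  sin κ * (cos κ + w) / (2 * √(2 * cos κ * (w - cos κ)))

noncomputable def reducedPrimitive (w κ : ℝ) : ℝ :=
  √2 / 4 * (√(cos κ * (w - cos κ)) - 3 * w / 2 * arcsin (2 * cos κ / w - 1))

lemma perimeter_integrand_eq (κ ρ : ℝ) :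
    sin (κ + ρ) * sin κ * sin ρ / √(-4 * cos κ * cos ρ * cos (κ + ρ)) =
      reducedIntegrand (cos (2 * ρ + κ - π)) κ := by
  have hsin : sin (κ + ρ) * sin ρ = (cos κ + cos (2 * ρ + κ - π)) / 2 := by
    rw [cos_sub_pi, cos_add, cos_two_mul, sin_two_mul, sin_add]
    linear_combination (cos κ) * sin_sq_add_cos_sq ρ
  have hcos : cos ρ * cos (κ + ρ) = (cos κ - cos (2 * ρ + κ - π)) / 2 := by
    rw [cos_sub_pi, cos_add (2 * ρ), cos_two_mul, sin_two_mul, cos_add]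
    ring
  rw [reducedIntegrand, mul_right_comm, hsin, mul_assoc _ (cos ρ), hcos,
    show -4 * cos κ * ((cos κ - cos (2 * ρ + κ - π)) / 2) =
      2 * cos κ * (cos (2 * ρ + κ - π) - cos κ) by ring]
  ring

lemma integral_perimeter_integrand_eq {κ : ℝ} (hκ : 0 ≤ κ) :
    ∫ ρ in (π / 2 - κ)..(π / 2), sin (κ + ρ) * sin κ * sin ρ / √(-4 * cos κ * cos ρ * cos (κ + ρ)) =
      2⁻¹ * ∫ ψ in Ioo (-κ) κ, reducedIntegrand (cos ψ) κ := by
  simp_rw [perimeter_integrand_eq, add_sub_assoc]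
  rw [intervalIntegral.integral_comp_mul_add (fun ψ => reducedIntegrand (cos ψ) κ) two_ne_zero,
    show 2 * (π / 2 - κ) + (κ - π) = -κ by ring, show 2 * (π / 2) + (κ - π) = κ by ring,
    intervalIntegral.integral_of_le (neg_le_self hκ), integral_Ioc_eq_integral_Ioo, smul_eq_mul]

lemma reducedIntegrand_nonneg {w κ : ℝ} (hsin : 0 ≤ sin κ) (hcos : 0 ≤ cos κ) (hw : cos κ ≤ w) :
    0 ≤ reducedIntegrand w κ :=
  div_nonneg (mul_nonneg hsin (by linarith)) (by positivity)

lemma continuous_reducedPrimitive (w : ℝ) : Continuous (reducedPrimitive w) := by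
  unfold reducedPrimitive; fun_prop

lemma measurable_reducedIntegrand : Measurable (uncurry fun κ ψ => reducedIntegrand (cos ψ) κ) := by
  unfold reducedIntegrand; fun_prop

lemma hasDerivAt_reducedPrimitive {w κ : ℝ} (hcos : 0 < cos κ) (hw : cos κ < w) :
    HasDerivAt (reducedPrimitive w) (reducedIntegrand w κ) κ := by
  set c := cos κ
  set q := c * (w - c)
  have hq : 0 < q := mul_pos hcos (by linarith)
  have hw0 : 0 < w := hcos.trans hw
  have hsqrt : HasDerivAt (fun x => √(cos x * (w - cos x))) (sin κ * (2 * c - w) / (2 * √q)) κ := by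
    refine ((hasDerivAt_sqrt hq.ne').comp κ
      ((hasDerivAt_cos κ).mul ((hasDerivAt_const κ w).sub (hasDerivAt_cos κ)))).congr_deriv ?_
    simp only [Pi.sub_apply]
    field_simp
    ring
  set x := 2 * c / w - 1
  have hx : √(1 - x ^ 2) = 2 * √q / w := by
    rw [← sqrt_sq (by positivity : 0 ≤ 2 * √q / w), div_pow, mul_pow, sq_sqrt hq.le]
    congr 1
    simp only [x, q]
    field_simp
    ring
  have hx₁ : x ≠ -1 := by
    have : 0 < 2 * c / w := by positivity
    grind
  have hx₂ : x ≠ 1 := by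
    have : 2 * c / w < 2 := by rw [div_lt_iff₀ hw0]; linarith
    grind
  have harcsin : HasDerivAt (fun y => arcsin (2 * cos y / w - 1)) (-sin κ / √q) κ := by
    refine ((hasDerivAt_arcsin hx₁ hx₂).comp κ
      ((((hasDerivAt_cos κ).const_mul 2).div_const w).sub_const 1)).congr_deriv ?_
    rw [hx]
    field_simp
  refine ((hsqrt.sub (harcsin.const_mul (3 * w / 2))).const_mul (√2 / 4)).congr_deriv ?_
  rw [reducedIntegrand, show 2 * c * (w - c) = 2 * q by ring, sqrt_mul zero_le_two]
  field_simp
  rw [sq_sqrt zero_le_two]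
  ring

lemma cos_pos_and_lt_of_mem_Ioo_abs {ψ κ : ℝ} (hκ : κ ∈ Ioo |ψ| (π / 2)) :
    0 < cos κ ∧ cos κ < cos ψ := by
  have hκ₀ : 0 < κ := (abs_nonneg ψ).trans_lt hκ.1
  refine ⟨cos_pos_of_mem_Ioo ⟨by linarith [pi_pos], hκ.2⟩, ?_⟩
  rw [← cos_abs ψ]
  exact cos_lt_cos_of_nonneg_of_le_pi (abs_nonneg ψ) (by linarith [hκ.2, pi_pos]) hκ.1

lemma hasDerivAt_reducedPrimitive_of_mem_Ioo_abs {ψ κ : ℝ} (hκ : κ ∈ Ioo |ψ| (π / 2)) :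
    HasDerivAt (reducedPrimitive (cos ψ)) (reducedIntegrand (cos ψ) κ) κ :=
  hasDerivAt_reducedPrimitive (cos_pos_and_lt_of_mem_Ioo_abs hκ).1
    (cos_pos_and_lt_of_mem_Ioo_abs hκ).2

lemma reducedIntegrand_nonneg_of_mem_Ioo_abs {ψ κ : ℝ} (hκ : κ ∈ Ioo |ψ| (π / 2)) :
    0 ≤ reducedIntegrand (cos ψ) κ :=
  reducedIntegrand_nonneg
    (sin_nonneg_of_nonneg_of_le_pi ((abs_nonneg ψ).trans hκ.1.le) (by linarith [hκ.2, pi_pos]))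
    (cos_pos_and_lt_of_mem_Ioo_abs hκ).1.le (cos_pos_and_lt_of_mem_Ioo_abs hκ).2.le

lemma integrableOn_reducedIntegrand_slice (ψ : ℝ) :
    IntegrableOn (reducedIntegrand (cos ψ)) (Ioo |ψ| (π / 2)) :=
  (intervalIntegral.integrableOn_deriv_of_nonneg (continuous_reducedPrimitive _).continuousOn
    (fun _ => hasDerivAt_reducedPrimitive_of_mem_Ioo_abs)
    (fun _ => reducedIntegrand_nonneg_of_mem_Ioo_abs)).mono_set Ioo_subset_Ioc_self

lemma setIntegral_reducedIntegrand_slice {ψ : ℝ} (hψ : |ψ| < π / 2) :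
    ∫ κ in Ioo |ψ| (π / 2), reducedIntegrand (cos ψ) κ = 3 * √2 * π * cos ψ / 8 := by
  have hw : cos ψ ≠ 0 := (cos_pos_of_mem_Ioo (abs_lt.1 hψ)).ne'
  rw [← integral_Ioc_eq_integral_Ioo, ← intervalIntegral.integral_of_le hψ.le,
    intervalIntegral.integral_eq_sub_of_hasDeriv_right_of_le hψ.le
      (continuous_reducedPrimitive _).continuousOn
      (fun κ hκ => (hasDerivAt_reducedPrimitive_of_mem_Ioo_abs hκ).hasDerivWithinAt)
      ((intervalIntegrable_iff_integrableOn_Ioo_of_le hψ.le).2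
        (integrableOn_reducedIntegrand_slice ψ))]
  simp only [reducedPrimitive, cos_pi_div_two, cos_abs, mul_zero, zero_div, sub_self,
    mul_div_assoc, div_self hw, zero_sub, mul_neg, sqrt_zero]
  norm_num [arcsin_neg_one]
  ring

lemma integrableOn_reducedIntegrand_triangle :
    IntegrableOn (uncurry fun κ ψ => reducedIntegrand (cos ψ) κ) (triangle (π / 2)) := by
  refine integrableOn_triangle_of_nonneg measurable_reducedIntegrand
    (fun p hp => reducedIntegrand_nonneg_of_mem_Ioo_abs hp)
    (fun ψ _ => integrableOn_reducedIntegrand_slice ψ) ?_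
  refine IntegrableOn.congr_fun (f := fun ψ => 3 * √2 * π * cos ψ / 8) ?_
    (fun ψ hψ => (setIntegral_reducedIntegrand_slice (abs_lt.2 hψ)).symm) measurableSet_Ioo
  exact (continuous_cos.const_mul _ |>.div_const _).integrableOn_Icc.mono_set Ioo_subset_Icc_self

/-- The perimeter density of a random spherical triangle, evaluated at τ = π,
equals 3√2/32. -/
theorem perimeter_density_at_pi :
    (1 / (4 * π)) *
      (∫ κ in (0:ℝ)..(π / 2), ∫ ρ in (π / 2 - κ)..(π / 2),
        Real.sin (κ + ρ) * Real.sin κ * Real.sin ρ /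
          Real.sqrt (-4 * Real.cos κ * Real.cos ρ * Real.cos (κ + ρ)))
    = 3 * Real.sqrt 2 / 32 := by
  have hcos : ∫ ψ in Ioo (-(π / 2)) (π / 2), 3 * √2 * π * cos ψ / 8 = 3 * √2 * π / 4 := by
    rw [← integral_Ioc_eq_integral_Ioo, ← intervalIntegral.integral_of_le (by linarith [pi_pos]),
      intervalIntegral.integral_div, intervalIntegral.integral_const_mul, integral_cos]
    norm_num
    ring
  rw [intervalIntegral.integral_of_le (by positivity), integral_Ioc_eq_integral_Ioo,
    setIntegral_congr_fun measurableSet_Ioo fun κ hκ => integral_perimeter_integrand_eq hκ.1.le,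
    integral_const_mul, integral_triangle_swap integrableOn_reducedIntegrand_triangle,
    setIntegral_congr_fun measurableSet_Ioo fun ψ hψ =>
      setIntegral_reducedIntegrand_slice (abs_lt.2 hψ), hcos]
  field_simp
  ring
end

section
/- The double integral ∫_{v=0}^{π/2} ∫_{u=π/2}^{π−v} sin(u)·(cos(v) − cos(u)) / (√(−cos(u))·√(cos(v) + cos(u))) du dv equals 3π/2. -/
open Real

/-! For fixed `v ∈ [0, π/2)` put `c = cos v > 0`. On `(π/2, π - v)` the inner integrand is the
derivative of `(3c/2) arcsin((-2 cos u - c)/c) - √(-cos u (c + cos u))`, which equals `-3πc/4` at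
`u = π/2` and `3πc/4` at `u = π - v`; so the inner integral is `3πc/2`, and `∫₀^{π/2} cos v dv = 1`.
The integrand is nonnegative, which makes it integrable on `(π/2, π - v)` although it is unbounded
near the endpoints. -/

theorem intervalIntegral.integral_eq_sub_of_hasDerivAt_of_nonneg {f f' : ℝ → ℝ} {a b : ℝ}
    (hab : a ≤ b) (hcont : ContinuousOn f (Set.Icc a b))
    (hderiv : ∀ x ∈ Set.Ioo a b, HasDerivAt f (f' x) x)
    (hpos : ∀ x ∈ Set.Ioo a b, 0 ≤ f' x) :
    ∫ x in a..b, f' x = f b - f a :=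
  integral_eq_sub_of_hasDerivAt_of_le hab hcont hderiv
    ((intervalIntegrable_iff_integrableOn_Ioc_of_le hab).2
      (integrableOn_deriv_of_nonneg hcont hderiv hpos))

noncomputable def innerPrimitive (c u : ℝ) : ℝ :=
  3 * c / 2 * arcsin ((-2 * cos u - c) / c) - √(-cos u * (c + cos u))

theorem continuous_innerPrimitive (c : ℝ) : Continuous (innerPrimitive c) := by
  unfold innerPrimitive
  fun_prop

theorem one_sub_sq_div_eq {c x : ℝ} (hc : c ≠ 0) :
    1 - ((-2 * x - c) / c) ^ 2 = 4 * (-x * (c + x)) / c ^ 2 := by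
  field_simp
  ring

theorem hasDerivAt_innerPrimitive {c u : ℝ} (hc : 0 < c) (hneg : cos u < 0)
    (hpos : 0 < c + cos u) :
    HasDerivAt (innerPrimitive c)
      (sin u * (c - cos u) / (√(-cos u) * √(c + cos u))) u := by
  have hprod : 0 < -cos u * (c + cos u) := mul_pos (neg_pos.2 hneg) hpos
  have hsqrt : √(1 - ((-2 * cos u - c) / c) ^ 2) = 2 * √(-cos u * (c + cos u)) / c := by
    rw [one_sub_sq_div_eq hc.ne', sqrt_div' _ (sq_nonneg c), sqrt_sq hc.le, sqrt_mul' _ hprod.le,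
      show √4 = 2 by rw [show (4 : ℝ) = 2 ^ 2 by norm_num, sqrt_sq zero_le_two]]
  have hne : ∀ s : ℝ, s = 1 ∨ s = -1 → (-2 * cos u - c) / c ≠ s := by
    rintro s hs h
    rw [div_eq_iff hc.ne'] at h
    rcases hs with rfl | rfl <;> nlinarith
  have harcsin : HasDerivAt (fun u ↦ arcsin ((-2 * cos u - c) / c))
      (2 * sin u / c / √(1 - ((-2 * cos u - c) / c) ^ 2)) u := by
    refine ((hasDerivAt_arcsin (hne (-1) (Or.inr rfl)) (hne 1 (Or.inl rfl))).comp u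
      ((((hasDerivAt_cos u).const_mul (-2)).sub_const c).div_const c)).congr_deriv ?_
    ring
  have hroot : HasDerivAt (fun u ↦ √(-cos u * (c + cos u)))
      ((sin u * (c + cos u) + -cos u * -sin u) / (2 * √(-cos u * (c + cos u)))) u :=
    (((hasDerivAt_cos u).neg.congr_deriv (neg_neg _)).mul
      ((hasDerivAt_cos u).const_add c)).sqrt hprod.ne'
  refine ((harcsin.const_mul (3 * c / 2)).sub hroot).congr_deriv ?_
  rw [hsqrt, sqrt_mul (neg_pos.2 hneg).le]
  have hroot_neg : 0 < √(-cos u) := sqrt_pos.2 (neg_pos.2 hneg)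
  have hroot_add : 0 < √(c + cos u) := sqrt_pos.2 hpos
  field_simp
  ring

theorem innerPrimitive_pi_div_two {c : ℝ} (hc : c ≠ 0) :
    innerPrimitive c (π / 2) = -(3 * π * c / 4) := by
  rw [innerPrimitive, cos_pi_div_two, show (-2 * 0 - c) / c = -1 by field_simp; ring,
    arcsin_neg_one]
  simp only [neg_zero, zero_mul, sqrt_zero]
  ring

theorem innerPrimitive_cos_pi_sub {v : ℝ} (hv : cos v ≠ 0) :
    innerPrimitive (cos v) (π - v) = 3 * π * cos v / 4 := by
  rw [innerPrimitive, cos_pi_sub, show (-2 * -cos v - cos v) / cos v = 1 by field_simp; ring,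
    arcsin_one, add_neg_cancel, mul_zero, sqrt_zero]
  ring

theorem cos_neg_and_cos_add_pos {u v : ℝ} (hv : 0 ≤ v) (hu : u ∈ Set.Ioo (π / 2) (π - v)) :
    cos u < 0 ∧ 0 < cos v + cos u := by
  refine ⟨cos_neg_of_pi_div_two_lt_of_lt hu.1 (by linarith [hu.2, pi_pos]), ?_⟩
  have := cos_lt_cos_of_nonneg_of_le_pi (by linarith [hu.1, pi_pos]) (by linarith) hu.2
  rw [cos_pi_sub] at this
  linarith

theorem integral_inner_eq_mul_cos {v : ℝ} (hv : v ∈ Set.Icc 0 (π / 2)) :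
    ∫ u in (π / 2)..(π - v), sin u * (cos v - cos u) / (√(-cos u) * √(cos v + cos u))
      = 3 * π / 2 * cos v := by
  obtain ⟨hv0, hv1⟩ := hv
  rcases hv1.eq_or_lt with rfl | hlt
  · simp [show π - π / 2 = π / 2 by ring]
  have hc : 0 < cos v := cos_pos_of_mem_Ioo ⟨by linarith [pi_pos], hlt⟩
  have hsign := fun u (hu : u ∈ Set.Ioo (π / 2) (π - v)) ↦ cos_neg_and_cos_add_pos hv0 hu
  rw [intervalIntegral.integral_eq_sub_of_hasDerivAt_of_nonneg (by linarith)
      (continuous_innerPrimitive _).continuousOn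
      (fun u hu ↦ hasDerivAt_innerPrimitive hc (hsign u hu).1 (hsign u hu).2),
    innerPrimitive_cos_pi_sub hc.ne', innerPrimitive_pi_div_two hc.ne']
  · ring
  · intro u hu
    have hsin : 0 ≤ sin u :=
      sin_nonneg_of_nonneg_of_le_pi (by linarith [hu.1, pi_pos]) (by linarith [hu.2])
    exact div_nonneg (mul_nonneg hsin (by linarith [(hsign u hu).1])) (by positivity)

/-- The double integral arising from the perimeter density of a random spherical
triangle at π, after the change of variables u = κ+ρ, v = κ−ρ, equals 3π/2. -/
theorem uv_integral_eq :
    (∫ v in (0:ℝ)..(π / 2), ∫ u in (π / 2)..(π - v),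
      Real.sin u * (Real.cos v - Real.cos u) /
        (Real.sqrt (-Real.cos u) * Real.sqrt (Real.cos v + Real.cos u)))
    = 3 * π / 2 := by
  rw [intervalIntegral.integral_congr fun v hv ↦
      integral_inner_eq_mul_cos (Set.uIcc_of_le (by positivity : (0 : ℝ) ≤ π / 2) ▸ hv),
    intervalIntegral.integral_const_mul, integral_cos]
  simp
end

section
/- The double integral ∫_{v=−1}^{1} ∫_{u=−1}^{0} u·(1 − v²) / (1 + v + (1 − v)·u²)² du dv equals −1/2. -/
/-! Since `1 - v ^ 2 = (1 + v) * (1 - v)`, the inner integrand is `u * (p * q) / (p + q * u ^ 2) ^ 2`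
with `p = 1 + v`, `q = 1 - v`, which has the elementary antiderivative `-p / (2 * (p + q * u ^ 2))`.
For `-1 < v ≤ 1` this gives the inner integral `(v - 1) / 4`, and integrating that over `[-1, 1]`
gives `-1/2`. -/

lemma hasDerivAt_neg_div_two_mul_add_mul_sq (p q u : ℝ) (h : p + q * u ^ 2 ≠ 0) :
    HasDerivAt (fun u : ℝ => -p / (2 * (p + q * u ^ 2)))
      (u * (p * q) / (p + q * u ^ 2) ^ 2) u := by
  have hden : HasDerivAt (fun u : ℝ => 2 * (p + q * u ^ 2)) (2 * (q * (2 * u))) u := by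
    simpa using (((hasDerivAt_pow 2 u).const_mul q).const_add p).const_mul 2
  refine ((hasDerivAt_const u (-p)).div hden (mul_ne_zero two_ne_zero h)).congr_deriv ?_
  field_simp
  ring

lemma integral_mul_div_add_mul_sq_sq {p q : ℝ} (hp : 0 < p) (hq : 0 ≤ q) (a b : ℝ) :
    ∫ u in a..b, u * (p * q) / (p + q * u ^ 2) ^ 2
      = p / 2 * (1 / (p + q * a ^ 2) - 1 / (p + q * b ^ 2)) := by
  have hpos : ∀ u : ℝ, 0 < p + q * u ^ 2 := fun u => by positivity
  rw [intervalIntegral.integral_eq_sub_of_hasDerivAt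
    (fun u _ => hasDerivAt_neg_div_two_mul_add_mul_sq p q u (hpos u).ne')
    (ContinuousOn.intervalIntegrable (by
      refine ContinuousOn.div (by fun_prop) (by fun_prop) fun u _ => ?_
      exact pow_ne_zero 2 (hpos u).ne'))]
  field_simp [(hpos a).ne', (hpos b).ne']
  ring

lemma inner_integral_eq {v : ℝ} (hv : v ∈ Set.Ioc (-1) 1) :
    ∫ u in (-1:ℝ)..0, u * (1 - v ^ 2) / (1 + v + (1 - v) * u ^ 2) ^ 2 = (v - 1) / 4 := by
  have hfactor : 1 - v ^ 2 = (1 + v) * (1 - v) := by ring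
  rw [hfactor, integral_mul_div_add_mul_sq_sq (by linarith [hv.1]) (by linarith [hv.2])]
  field_simp [show 1 + v ≠ 0 by linarith [hv.1]]
  ring

/-- The double integral arising from the area density of a random spherical
triangle at σ = π equals −1/2. -/
theorem area_density_uv_integral :
    (∫ v in (-1:ℝ)..1, ∫ u in (-1:ℝ)..0,
      u * (1 - v ^ 2) / (1 + v + (1 - v) * u ^ 2) ^ 2) = -(1 / 2) := by
  have hinner : (∫ v in (-1:ℝ)..1, ∫ u in (-1:ℝ)..0,
      u * (1 - v ^ 2) / (1 + v + (1 - v) * u ^ 2) ^ 2) = ∫ v in (-1:ℝ)..1, (v - 1) / 4 := by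
    refine intervalIntegral.integral_congr_ae (Filter.Eventually.of_forall fun v hv => ?_)
    rw [Set.uIoc_of_le (by norm_num)] at hv
    exact inner_integral_eq hv
  rw [hinner, intervalIntegral.integral_div, intervalIntegral.integral_sub
    intervalIntegral.intervalIntegrable_id intervalIntegrable_const, integral_id]
  norm_num
end

section
/- Let Ω be a real number and let σ satisfy 0 ≤ σ < π. Then ∫_{θ=σ/2}^{π} 1/(Ω²·sin²(θ − σ/2) + 1) dθ = (π − arctan(√(Ω²+1)·tan(σ/2))) / √(Ω²+1). -/
/-!
With `k = √(Ω² + 1)` and `u = θ - σ/2`, the integrand is `k⁻¹ · d/du arctan (k tan u)`. Since `tan`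
has a pole at `π/2`, inside the range of integration, we integrate instead the smooth lift
`F u = arctanMulTan k u = u + arctan ((k - 1) sin u cos u / (cos² u + k sin² u))`, which agrees
with `arctan (k tan u)` on `(-π/2, π/2)` by the subtraction formula for `tan` and satisfies
`F (π - u) = π - F u`. Hence the integral is
`(F (π - σ/2) - F 0) / k = (π - arctan (k tan (σ/2))) / k`.
-/

open Real

noncomputable section

def arctanMulTan (k u : ℝ) : ℝ :=
  u + arctan ((k - 1) * sin u * cos u / (cos u ^ 2 + k * sin u ^ 2))

variable {k : ℝ}

lemma cos_sq_add_mul_sin_sq_pos (hk : 0 < k) (u : ℝ) : 0 < cos u ^ 2 + k * sin u ^ 2 := by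
  rcases eq_or_ne (cos u) 0 with hc | hc
  · have := sin_sq_add_cos_sq u
    rw [hc] at this ⊢
    nlinarith
  · have : 0 < cos u ^ 2 := by positivity
    nlinarith [sq_nonneg (sin u)]

lemma sq_sub_one_mul_sin_sq_add_one_pos (hk : k ≠ 0) (u : ℝ) :
    0 < (k ^ 2 - 1) * sin u ^ 2 + 1 := by
  have := cos_sq_add_mul_sin_sq_pos (by positivity : 0 < k ^ 2) u
  linarith [sin_sq_add_cos_sq u]

lemma hasDerivAt_arctanMulTan (hk : 0 < k) (u : ℝ) :
    HasDerivAt (arctanMulTan k) (k / ((k ^ 2 - 1) * sin u ^ 2 + 1)) u := by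
  have hsc := sin_sq_add_cos_sq u
  have hD := cos_sq_add_mul_sin_sq_pos hk u
  have hnum : HasDerivAt (fun u => (k - 1) * sin u * cos u) ((k - 1) * (cos u ^ 2 - sin u ^ 2)) u :=
    (((hasDerivAt_sin u).const_mul (k - 1)).mul (hasDerivAt_cos u)).congr_deriv (by ring)
  have hden : HasDerivAt (fun u => cos u ^ 2 + k * sin u ^ 2) (2 * (k - 1) * sin u * cos u) u :=
    (((hasDerivAt_cos u).pow 2).add (((hasDerivAt_sin u).pow 2).const_mul k)).congr_deriv
      (by ring)
  refine ((hasDerivAt_id u).add (hnum.div hden hD.ne').arctan).congr_deriv ?_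
  have hE := sq_sub_one_mul_sin_sq_add_one_pos hk.ne' u
  simp only [Pi.div_apply]
  field_simp
  rw [eq_div_iff (by linarith), show cos u ^ 2 = 1 - sin u ^ 2 by linarith]
  ring

lemma arctanMulTan_eq_arctan_mul_tan (hk : 0 < k) {x : ℝ} (hx₁ : -(π / 2) < x)
    (hx₂ : x < π / 2) : arctanMulTan k x = arctan (k * tan x) := by
  set A := arctan (k * tan x)
  have hcos : 0 < cos x := cos_pos_of_mem_Ioo ⟨hx₁, hx₂⟩
  have hD := cos_sq_add_mul_sin_sq_pos hk x
  have htan_sub : tan (A - x) = (k - 1) * sin x * cos x / (cos x ^ 2 + k * sin x ^ 2) := by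
    have : 0 < √(1 + (k * tan x) ^ 2) := by positivity
    rw [tan_eq_sin_div_cos, sin_sub, cos_sub, sin_arctan, cos_arctan, tan_eq_sin_div_cos]
    field_simp
  -- `A` and `x` have the same sign, so `A - x` stays in the principal range of `arctan`.
  have hA_sub : -(π / 2) < A - x ∧ A - x < π / 2 := by
    have := neg_pi_div_two_lt_arctan (k * tan x)
    have := arctan_lt_pi_div_two (k * tan x)
    rcases le_total 0 x with hx | hx
    · have : 0 ≤ A := arctan_nonneg.2 <|
        mul_nonneg hk.le (tan_nonneg_of_nonneg_of_le_pi_div_two hx hx₂.le)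
      constructor <;> linarith
    · have : A ≤ 0 := arctan_zero ▸ arctan_strictMono.monotone
        (mul_nonpos_of_nonneg_of_nonpos hk.le
          (tan_nonpos_of_nonpos_of_neg_pi_div_two_le hx hx₁.le))
      constructor <;> linarith
  have := arctan_tan hA_sub.1 hA_sub.2
  rw [htan_sub] at this
  rw [arctanMulTan, this]
  ring

lemma arctanMulTan_zero : arctanMulTan k 0 = 0 := by
  simp [arctanMulTan]

lemma arctanMulTan_pi_sub (x : ℝ) : arctanMulTan k (π - x) = π - arctanMulTan k x := by
  simp only [arctanMulTan, sin_pi_sub, cos_pi_sub, neg_sq, mul_neg, neg_div, arctan_neg]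
  ring

lemma integral_one_div_sq_sub_one_mul_sin_sq_add_one (hk : 0 < k) (a b : ℝ) :
    ∫ u in a..b, 1 / ((k ^ 2 - 1) * sin u ^ 2 + 1) =
      (arctanMulTan k b - arctanMulTan k a) / k := by
  rw [eq_div_iff hk.ne', ← intervalIntegral.integral_mul_const]
  refine intervalIntegral.integral_eq_sub_of_hasDerivAt (fun u _ => ?_) ?_
  · rw [one_div_mul_eq_div]
    exact hasDerivAt_arctanMulTan hk u
  · have hE (u : ℝ) := (sq_sub_one_mul_sin_sq_add_one_pos hk.ne' u).ne'
    exact Continuous.intervalIntegrable (by fun_prop (disch := exact hE)) _ _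

end

/-- Key integral evaluation for the area density of a random spherical triangle,
case 0 ≤ σ < π. -/
theorem area_density_integral_lt_pi (Ω σ : ℝ) (h0 : 0 ≤ σ) (h1 : σ < π) :
    (∫ θ in (σ / 2)..π, 1 / (Ω ^ 2 * Real.sin (θ - σ / 2) ^ 2 + 1))
    = (π - Real.arctan (Real.sqrt (Ω ^ 2 + 1) * Real.tan (σ / 2))) /
        Real.sqrt (Ω ^ 2 + 1) := by
  set k := √(Ω ^ 2 + 1)
  have hk : 0 < k := by positivity
  have hΩ : Ω ^ 2 = k ^ 2 - 1 := by rw [sq_sqrt (by positivity)]; ring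
  rw [hΩ, intervalIntegral.integral_comp_sub_right (fun u => 1 / ((k ^ 2 - 1) * sin u ^ 2 + 1)),
    integral_one_div_sq_sub_one_mul_sin_sq_add_one hk, sub_self, arctanMulTan_zero,
    arctanMulTan_pi_sub, arctanMulTan_eq_arctan_mul_tan hk (by linarith) (by linarith), sub_zero]
end

section
/- Let y satisfy 0 < y < π. Then ∫_{x=0}^{π} [π − arctan(√(tan²(x/2)/sin²(y/2) + 1)·tan(y/2))] / √(tan²(x/2)/sin²(y/2) + 1) · sin(x) dx = (4·tan(y/2)/cos²(y/2)) · ∫_{z=y/2}^{π/2} (π − z)·cos²(z) dz. -/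
open Real

/-!
Put `c = cos (y/2)`, `s = sin (y/2)` and substitute `z = arccos (c cos (x/2))`, so that `z` runs
from `y/2` to `π/2` as `x` runs from `0` to `π`. With `w = c cos (x/2)` one has
`1 + tan² (x/2) / s² = (1 - w²) / (s cos (x/2))²`, hence the arctangent in the integrand is
`arctan (tan z) = z`, and the remaining factors are
`4 tan (y/2) / c² · cos² z` times the Jacobian `dz/dx = c sin (x/2) / (2 sin z)`.
-/

lemma abs_mul_cos_lt_one {c : ℝ} (hc : |c| < 1) (t : ℝ) : |c * cos t| < 1 :=
  calc |c * cos t| = |c| * |cos t| := abs_mul c (cos t)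
    _ ≤ |c| * 1 := by gcongr; exact abs_cos_le_one t
    _ < 1 := by linarith

lemma hasDerivAt_arccos_mul_cos_half {c : ℝ} (hc : |c| < 1) (x : ℝ) :
    HasDerivAt (fun x => arccos (c * cos (x / 2)))
      (c * sin (x / 2) / (2 * √(1 - (c * cos (x / 2)) ^ 2))) x := by
  obtain ⟨hw₀, hw₁⟩ := abs_lt.mp (abs_mul_cos_lt_one hc (x / 2))
  have hinner : HasDerivAt (fun x => c * cos (x / 2)) (c * (-sin (x / 2) * (1 / 2))) x :=
    (((hasDerivAt_id x).div_const 2).cos).const_mul c |>.congr_deriv (by simp)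
  refine ((hasDerivAt_arccos hw₀.ne' hw₁.ne).comp x hinner).congr_deriv ?_
  ring

lemma integral_arccos_mul_cos_half_subst {c : ℝ} (hc : |c| < 1) {G : ℝ → ℝ}
    (hG : Continuous G) :
    ∫ x in (0 : ℝ)..π,
        c * sin (x / 2) / (2 * √(1 - (c * cos (x / 2)) ^ 2)) * G (arccos (c * cos (x / 2)))
      = ∫ z in arccos c..π / 2, G z := by
  have hroot (x : ℝ) : 0 < √(1 - (c * cos (x / 2)) ^ 2) :=
    sqrt_pos.mpr <| sub_pos.mpr <| (sq_lt_one_iff_abs_lt_one _).mpr (abs_mul_cos_lt_one hc _)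
  have hderiv_cont : ContinuousOn
      (fun x => c * sin (x / 2) / (2 * √(1 - (c * cos (x / 2)) ^ 2))) (Set.uIcc 0 π) :=
    ContinuousOn.div (by fun_prop) (by fun_prop) fun x _ => (mul_pos two_pos (hroot x)).ne'
  have := intervalIntegral.integral_deriv_smul_comp
    (fun x _ => hasDerivAt_arccos_mul_cos_half hc x) hderiv_cont hG
  simpa [cos_pi_div_two] using this

lemma sqrt_tan_sq_div_sin_sq_add_one {a b : ℝ} (ha : 0 < cos a) (hb : 0 < sin b) :
    √(tan a ^ 2 / sin b ^ 2 + 1) = √(1 - (cos b * cos a) ^ 2) / (sin b * cos a) := by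
  have hnum : 1 - (cos b * cos a) ^ 2 = sin a ^ 2 + sin b ^ 2 * cos a ^ 2 := by
    linear_combination -sin_sq_add_cos_sq a - cos a ^ 2 * sin_sq_add_cos_sq b
  have hsq : tan a ^ 2 / sin b ^ 2 + 1 = (√(1 - (cos b * cos a) ^ 2) / (sin b * cos a)) ^ 2 := by
    rw [div_pow, sq_sqrt (by rw [hnum]; positivity), hnum, tan_eq_sin_div_cos]
    field_simp
  rw [hsq, sqrt_sq (by positivity)]

lemma arctan_sqrt_tan_sq_div_sin_sq_add_one_mul_tan {a b : ℝ} (ha : 0 < cos a)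
    (hb₀ : 0 < sin b) (hb₁ : 0 < cos b) :
    arctan (√(tan a ^ 2 / sin b ^ 2 + 1) * tan b) = arccos (cos b * cos a) := by
  have hw : 0 < cos b * cos a := mul_pos hb₁ ha
  have : √(tan a ^ 2 / sin b ^ 2 + 1) * tan b = tan (arccos (cos b * cos a)) := by
    rw [sqrt_tan_sq_div_sin_sq_add_one ha hb₀, tan_arccos, tan_eq_sin_div_cos]
    field_simp
  rw [this, arctan_tan (by linarith [arccos_nonneg (cos b * cos a), pi_pos])
    (arccos_lt_pi_div_two.mpr hw)]

lemma crofton_integrand_eq {x y : ℝ} (hx₀ : 0 < x) (hx₁ : x < π) (hy₀ : 0 < y) (hy₁ : y < π) :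
    (π - arctan (√(tan (x / 2) ^ 2 / sin (y / 2) ^ 2 + 1) * tan (y / 2))) /
        √(tan (x / 2) ^ 2 / sin (y / 2) ^ 2 + 1) * sin x
      = 4 * tan (y / 2) / cos (y / 2) ^ 2 *
        (cos (y / 2) * sin (x / 2) / (2 * √(1 - (cos (y / 2) * cos (x / 2)) ^ 2)) *
          ((π - arccos (cos (y / 2) * cos (x / 2))) *
            cos (arccos (cos (y / 2) * cos (x / 2))) ^ 2)) := by
  have hxc : 0 < cos (x / 2) := cos_pos_of_mem_Ioo ⟨by linarith, by linarith⟩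
  have hxs : 0 < sin (x / 2) := sin_pos_of_pos_of_lt_pi (by linarith) (by linarith)
  have hyc : 0 < cos (y / 2) := cos_pos_of_mem_Ioo ⟨by linarith, by linarith⟩
  have hys : 0 < sin (y / 2) := sin_pos_of_pos_of_lt_pi (by linarith) (by linarith)
  have hw₁ : cos (y / 2) * cos (x / 2) ≤ 1 := by
    nlinarith [cos_le_one (x / 2), cos_le_one (y / 2)]
  have hroot : 0 < √(1 - (cos (y / 2) * cos (x / 2)) ^ 2) := by
    refine sqrt_pos.mpr ?_
    nlinarith [sin_sq_add_cos_sq (x / 2), sin_sq_add_cos_sq (y / 2), mul_pos hxs hys]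
  rw [arctan_sqrt_tan_sq_div_sin_sq_add_one_mul_tan hxc hys hyc,
    sqrt_tan_sq_div_sin_sq_add_one hxc hys, cos_arccos (by nlinarith) hw₁, tan_eq_sin_div_cos,
    show sin x = sin (2 * (x / 2)) by ring_nf, sin_two_mul]
  field_simp
  ring

/-- The Crofton substitution cos z = cos(x/2)cos(y/2) reduces the area-density
integral (case 0 < y < π) to an elementary integral. -/
theorem crofton_substitution_lt_pi (y : ℝ) (h0 : 0 < y) (h1 : y < π) :
    (∫ x in (0:ℝ)..π,
      (π - Real.arctan (Real.sqrt (Real.tan (x / 2) ^ 2 / Real.sin (y / 2) ^ 2 + 1) *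
          Real.tan (y / 2))) /
        Real.sqrt (Real.tan (x / 2) ^ 2 / Real.sin (y / 2) ^ 2 + 1) * Real.sin x)
    = (4 * Real.tan (y / 2) / Real.cos (y / 2) ^ 2) *
        ∫ z in (y / 2)..(π / 2), (π - z) * Real.cos z ^ 2 := by
  have hc : |cos (y / 2)| < 1 := by
    rw [← sq_lt_one_iff_abs_lt_one, ← sin_sq_add_cos_sq (y / 2), lt_add_iff_pos_left]
    exact pow_pos (sin_pos_of_pos_of_lt_pi (by linarith) (by linarith)) 2
  have hsubst := integral_arccos_mul_cos_half_subst hc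
    (by fun_prop : Continuous fun z => (π - z) * cos z ^ 2)
  rw [arccos_cos (by linarith) (by linarith)] at hsubst
  rw [← hsubst, ← intervalIntegral.integral_const_mul]
  exact intervalIntegral.integral_congr_Ioo_of_le pi_pos.le fun x hx =>
    crofton_integrand_eq hx.1 hx.2 h0 h1
end

section
/- Let a, b, c, γ, σ, ρ, θ be real numbers with cos(c/2) ≠ 0 and cos(c/2) + cos(ρ) ≠ 0, satisfying: (i) cos(a) = cos(ρ)·cos(c/2) + sin(ρ)·sin(c/2)·cos(θ); (ii) cos(b) = cos(ρ)·cos(c/2) − sin(ρ)·sin(c/2)·cos(θ); (iii) sin(a)·sin(b)·sin(γ) = sin(ρ)·sin(θ)·sin(c); and (iv) tan(σ/2)·(1 + cos(a) + cos(b) + cos(c)) = sin(a)·sin(b)·sin(γ). Then tan(σ/2) = sin(c/2)·sin(ρ)·sin(θ) / (cos(c/2) + cos(ρ)). -/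
/-!
Adding the two laws of cosines gives `cos a + cos b = 2 cos ρ cos (c/2)`, so by the half-angle
formula Eriksson's denominator `1 + cos a + cos b + cos c` equals `2 cos (c/2) (cos (c/2) + cos ρ)`,
while the law of sines and `sin c = 2 sin (c/2) cos (c/2)` turn his numerator into
`2 cos (c/2) · sin (c/2) sin ρ sin θ`. Cancelling the common factor `2 cos (c/2)` gives the formula.
-/

open Real

lemma one_add_cos_add_cos_add_cos_eq {a b c ρ : ℝ}
    (hab : cos a + cos b = 2 * cos ρ * cos (c / 2)) :
    1 + cos a + cos b + cos c = 2 * cos (c / 2) * (cos (c / 2) + cos ρ) := by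
  have hc : cos (c / 2) ^ 2 = 1 / 2 + cos c / 2 := by
    rw [cos_sq, mul_div_cancel₀ c two_ne_zero]
  linear_combination hab - 2 * hc

/-- The median formula for the area of a spherical triangle: if ρ is the median
length from C to the midpoint P of side c and θ is the angle between PB and PC,
then tan(σ/2) = sin(c/2)·sin(ρ)·sin(θ)/(cos(c/2) + cos(ρ)). -/
theorem median_area_formula (a b c γ σ ρ θ : ℝ)
    (hc : Real.cos (c / 2) ≠ 0) (hden : Real.cos (c / 2) + Real.cos ρ ≠ 0)
    (h1 : Real.cos a = Real.cos ρ * Real.cos (c / 2) +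
      Real.sin ρ * Real.sin (c / 2) * Real.cos θ)
    (h2 : Real.cos b = Real.cos ρ * Real.cos (c / 2) -
      Real.sin ρ * Real.sin (c / 2) * Real.cos θ)
    (h3 : Real.sin a * Real.sin b * Real.sin γ = Real.sin ρ * Real.sin θ * Real.sin c)
    (h4 : Real.tan (σ / 2) * (1 + Real.cos a + Real.cos b + Real.cos c) =
      Real.sin a * Real.sin b * Real.sin γ) :
    Real.tan (σ / 2) =
      Real.sin (c / 2) * Real.sin ρ * Real.sin θ / (Real.cos (c / 2) + Real.cos ρ) := by
  have hab : cos a + cos b = 2 * cos ρ * cos (c / 2) := by rw [h1, h2]; ring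
  have hsin : sin c = 2 * sin (c / 2) * cos (c / 2) := by
    rw [← sin_two_mul, mul_div_cancel₀ c two_ne_zero]
  have key : 2 * cos (c / 2) * (tan (σ / 2) * (cos (c / 2) + cos ρ)) =
      2 * cos (c / 2) * (sin (c / 2) * sin ρ * sin θ) :=
    calc 2 * cos (c / 2) * (tan (σ / 2) * (cos (c / 2) + cos ρ))
        = tan (σ / 2) * (1 + cos a + cos b + cos c) := by
          rw [one_add_cos_add_cos_add_cos_eq hab]; ring
      _ = sin ρ * sin θ * sin c := h4.trans h3
      _ = 2 * cos (c / 2) * (sin (c / 2) * sin ρ * sin θ) := by rw [hsin]; ring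
  rw [eq_div_iff hden]
  exact mul_left_cancel₀ (mul_ne_zero two_ne_zero hc) key
end

section
/- Let α, β, γ, c, τ, ρ, θ be real numbers with sin(α) = 2·sin(α/2)·cos(α/2) (automatic), sin(α/2) + cos(ρ)·sin(θ) ≠ 0 and sin(α/2) ≠ 0, satisfying: (i) −cos(γ) = cos(θ)·cos(α/2) + sin(θ)·sin(α/2)·cos(ρ); (ii) −cos(β) = −cos(θ)·cos(α/2) + sin(θ)·sin(α/2)·cos(ρ); (iii) sin(β)·sin(c) = sin(ρ)·sin(θ); and (iv) tan(τ/2)·(cos(α) + cos(β) + cos(γ) − 1) = sin(α)·sin(β)·sin(c). Then tan(τ/2) = −cos(α/2)·sin(ρ)·sin(θ) / (sin(α/2) + cos(ρ)·sin(θ)). -/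
open Real

/-! Adding (i) and (ii) cancels the `cos θ` terms, and with `cos α = 1 - 2 sin² (α/2)` the
denominator of Eriksson's dual formula (iv) factors as
`cos α + cos β + cos γ - 1 = -2 sin (α/2) (sin (α/2) + cos ρ sin θ)`.
By (iii) and `sin α = 2 sin (α/2) cos (α/2)` its numerator is `2 sin (α/2) cos (α/2) sin ρ sin θ`;
cancelling the common factor `2 sin (α/2)` gives the formula. -/

theorem cos_add_cos_add_cos_sub_one_of_bisector {α β γ ρ θ : ℝ}
    (h1 : -cos γ = cos θ * cos (α / 2) + sin θ * sin (α / 2) * cos ρ)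
    (h2 : -cos β = -(cos θ * cos (α / 2)) + sin θ * sin (α / 2) * cos ρ) :
    cos α + cos β + cos γ - 1 = -2 * sin (α / 2) * (sin (α / 2) + cos ρ * sin θ) := by
  have hcos : cos α = 1 - 2 * sin (α / 2) ^ 2 := by
    rw [← cos_two_mul_eq_one_sub, mul_div_cancel₀ α two_ne_zero]
  linear_combination hcos - h1 - h2

theorem bisector_perimeter_formula_general (α β γ c τ ρ θ : ℝ)
    (hden : Real.sin (α / 2) + Real.cos ρ * Real.sin θ ≠ 0)
    (hα : Real.sin (α / 2) ≠ 0)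
    (h1 : -Real.cos γ = Real.cos θ * Real.cos (α / 2) +
      Real.sin θ * Real.sin (α / 2) * Real.cos ρ)
    (h2 : -Real.cos β = -(Real.cos θ * Real.cos (α / 2)) +
      Real.sin θ * Real.sin (α / 2) * Real.cos ρ)
    (h3 : Real.sin β * Real.sin c = Real.sin ρ * Real.sin θ)
    (h4 : Real.tan (τ / 2) * (Real.cos α + Real.cos β + Real.cos γ - 1) =
      Real.sin α * Real.sin β * Real.sin c) :
    Real.tan (τ / 2) =
      -(Real.cos (α / 2) * Real.sin ρ * Real.sin θ) /
        (Real.sin (α / 2) + Real.cos ρ * Real.sin θ) := by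
  have hsin : sin α = 2 * sin (α / 2) * cos (α / 2) := by
    rw [← sin_two_mul, mul_div_cancel₀ α two_ne_zero]
  rw [cos_add_cos_add_cos_sub_one_of_bisector h1 h2, hsin, mul_assoc _ (sin β), h3] at h4
  rw [eq_div_iff hden]
  apply mul_left_cancel₀ (mul_ne_zero (two_ne_zero' ℝ) hα)
  linear_combination -h4

/-- The angle-bisector formula for the perimeter of a spherical triangle: if Q is
the intersection of the bisector of angle α with side BC, ρ is the spherical
distance from Q to A and θ is the angle between QC and QA, then
tan(τ/2) = −cos(α/2)·sin(ρ)·sin(θ)/(sin(α/2) + cos(ρ)·sin(θ)). -/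
theorem bisector_perimeter_formula (α β γ c τ ρ θ : ℝ)
    (hauto : Real.sin α = 2 * Real.sin (α / 2) * Real.cos (α / 2))
    (hden : Real.sin (α / 2) + Real.cos ρ * Real.sin θ ≠ 0)
    (hα : Real.sin (α / 2) ≠ 0)
    (h1 : -Real.cos γ = Real.cos θ * Real.cos (α / 2) +
      Real.sin θ * Real.sin (α / 2) * Real.cos ρ)
    (h2 : -Real.cos β = -(Real.cos θ * Real.cos (α / 2)) +
      Real.sin θ * Real.sin (α / 2) * Real.cos ρ)
    (h3 : Real.sin β * Real.sin c = Real.sin ρ * Real.sin θ)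
    (h4 : Real.tan (τ / 2) * (Real.cos α + Real.cos β + Real.cos γ - 1) =
      Real.sin α * Real.sin β * Real.sin c) :
    Real.tan (τ / 2) =
      -(Real.cos (α / 2) * Real.sin ρ * Real.sin θ) /
        (Real.sin (α / 2) + Real.cos ρ * Real.sin θ) :=
  bisector_perimeter_formula_general α β γ c τ ρ θ hden hα h1 h2 h3 h4
end

section
/- Let τ ∈ (0, π), α ∈ (0, π), and ρ ∈ [0, π] satisfy cos(ρ) = −(cos(τ/2) + sin(α/2)) / (1 + cos(τ/2)·sin(α/2)). Then tan(τ/2)·cos(ρ) + cos(α/2)·sin(ρ) + tan(τ/2)·sin(α/2) = 0. -/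
/-!
With `c = cos θ`, `s = sin θ`, `a = sin φ`, `b = cos φ`, the identity
`(1 + c a)² - (c + a)² = (1 - c²)(1 - a²) = (s b)²` shows that `cos ρ = -(c + a)/(1 + c a)`
forces `sin ρ = s b/(1 + c a)` once `sin ρ ≥ 0`. Substituting both values, the left-hand side
becomes `s (a² + b² - 1)/(1 + c a)`, which vanishes.
-/

open Real

namespace Real

variable {θ φ ρ : ℝ}

lemma one_sub_sq_div_one_add_cos_mul_sin (hd : 1 + cos θ * sin φ ≠ 0) :
    1 - ((cos θ + sin φ) / (1 + cos θ * sin φ)) ^ 2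
      = (sin θ * cos φ / (1 + cos θ * sin φ)) ^ 2 := by
  field_simp
  linear_combination (-cos φ ^ 2) * sin_sq_add_cos_sq θ - (1 - cos θ ^ 2) * sin_sq_add_cos_sq φ

lemma sin_eq_of_cos_eq_neg_div (hρ0 : 0 ≤ ρ) (hρπ : ρ ≤ π) (hθ : 0 ≤ sin θ) (hφ : 0 ≤ cos φ)
    (hd : 0 < 1 + cos θ * sin φ)
    (h : cos ρ = -((cos θ + sin φ) / (1 + cos θ * sin φ))) :
    sin ρ = sin θ * cos φ / (1 + cos θ * sin φ) := by
  rw [sin_eq_sqrt_one_sub_cos_sq hρ0 hρπ, h, neg_sq,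
    one_sub_sq_div_one_add_cos_mul_sin hd.ne', sqrt_sq (by positivity)]

lemma tan_mul_cos_add_cos_mul_sin_add_tan_mul_sin_eq_zero (hθ : cos θ ≠ 0)
    (hd : 1 + cos θ * sin φ ≠ 0)
    (hcos : cos ρ = -((cos θ + sin φ) / (1 + cos θ * sin φ)))
    (hsin : sin ρ = sin θ * cos φ / (1 + cos θ * sin φ)) :
    tan θ * cos ρ + cos φ * sin ρ + tan θ * sin φ = 0 := by
  rw [tan_eq_sin_div_cos, hcos, hsin]
  field_simp
  linear_combination (sin θ * cos θ) * sin_sq_add_cos_sq φ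

end Real

/-- The threshold value ρ_thres in the angle-bisector parametrization: at
cos(ρ) = −(cos(τ/2)+sin(α/2))/(1+cos(τ/2)·sin(α/2)) the defining equation of
the boundary curve is satisfied. -/
theorem bisector_threshold (τ α ρ : ℝ)
    (hτ0 : 0 < τ) (hτ1 : τ < π) (hα0 : 0 < α) (hα1 : α < π)
    (hρ0 : 0 ≤ ρ) (hρ1 : ρ ≤ π)
    (h : Real.cos ρ = -((Real.cos (τ / 2) + Real.sin (α / 2)) /
      (1 + Real.cos (τ / 2) * Real.sin (α / 2)))) :
    Real.tan (τ / 2) * Real.cos ρ + Real.cos (α / 2) * Real.sin ρ +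
      Real.tan (τ / 2) * Real.sin (α / 2) = 0 := by
  have hcτ : 0 < cos (τ / 2) := cos_pos_of_mem_Ioo ⟨by linarith, by linarith⟩
  have hsτ : 0 < sin (τ / 2) := sin_pos_of_pos_of_lt_pi (by linarith) (by linarith)
  have hcα : 0 < cos (α / 2) := cos_pos_of_mem_Ioo ⟨by linarith, by linarith⟩
  have hsα : 0 < sin (α / 2) := sin_pos_of_pos_of_lt_pi (by linarith) (by linarith)
  have hd : 0 < 1 + cos (τ / 2) * sin (α / 2) := by positivity
  exact tan_mul_cos_add_cos_mul_sin_add_tan_mul_sin_eq_zero hcτ.ne' hd.ne' h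
    (sin_eq_of_cos_eq_neg_div hρ0 hρ1 hsτ.le hcα.le hd h)
end

section
/- Let τ, κ, φ, ψ be real numbers with φ ∈ (0, π), ψ ∈ (0, π), cos(τ/2) ≠ 0, and sin(τ/2 − κ) ≠ 0, satisfying tan(τ/2)·(cos(φ) + cos(ψ) − cos(φ)·cos(ψ) + cos(κ)·sin(φ)·sin(ψ) − 1) = sin(φ)·sin(ψ)·sin(κ). Set T = tan(φ/2)·sin(τ/2)/sin(τ/2 − κ). Then cos(ψ) = (T² − 1)/(T² + 1). -/
open Real

/-! Cleared of `tan (τ / 2)` and written in half angles, the perimeter relation factors as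
`4 sin (φ/2) sin (ψ/2) (cos (φ/2) cos (ψ/2) sin (τ/2 - κ) - sin (τ/2) sin (φ/2) sin (ψ/2)) = 0`.
For `φ, ψ ∈ (0, π)` the second factor vanishes, i.e. `cot (ψ/2) = T`, and the
double-angle formula turns this into the value of `cos ψ`. -/

theorem eriksson_half_angle_identity (σ κ φ ψ : ℝ) :
    sin σ * (cos φ + cos ψ - cos φ * cos ψ + cos κ * sin φ * sin ψ - 1)
        - sin φ * sin ψ * sin κ * cos σ =
      4 * sin (φ / 2) * sin (ψ / 2) *
        (cos (φ / 2) * cos (ψ / 2) * sin (σ - κ) - sin σ * sin (φ / 2) * sin (ψ / 2)) := by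
  have hcosφ : cos φ = 2 * cos (φ / 2) ^ 2 - 1 := by rw [← cos_two_mul]; ring_nf
  have hsinφ : sin φ = 2 * sin (φ / 2) * cos (φ / 2) := by rw [← sin_two_mul]; ring_nf
  have hcosψ : cos ψ = 2 * cos (ψ / 2) ^ 2 - 1 := by rw [← cos_two_mul]; ring_nf
  have hsinψ : sin ψ = 2 * sin (ψ / 2) * cos (ψ / 2) := by rw [← sin_two_mul]; ring_nf
  have hcosκ : cos κ = cos σ * cos (σ - κ) + sin σ * sin (σ - κ) := by
    rw [← cos_sub, sub_sub_cancel]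
  have hsinκ : sin κ = sin σ * cos (σ - κ) - cos σ * sin (σ - κ) := by
    rw [← sin_sub, sub_sub_cancel]
  rw [hcosφ, hsinφ, hcosψ, hsinψ, hcosκ, hsinκ]
  linear_combination 4 * sin (φ / 2) * cos (φ / 2) * sin (ψ / 2) * cos (ψ / 2) * sin (σ - κ)
      * sin_sq_add_cos_sq σ
    + 4 * sin σ * (1 - cos (ψ / 2) ^ 2) * sin_sq_add_cos_sq (φ / 2)
    + 4 * sin σ * sin (φ / 2) ^ 2 * sin_sq_add_cos_sq (ψ / 2)

theorem cos_two_mul_of_cos_eq_mul_sin {θ T : ℝ} (h : cos θ = T * sin θ) :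
    cos (2 * θ) = (T ^ 2 - 1) / (T ^ 2 + 1) := by
  have hsum : (T ^ 2 + 1) * sin θ ^ 2 = 1 := by
    linear_combination -(cos θ + T * sin θ) * h + sin_sq_add_cos_sq θ
  rw [eq_div_iff (by positivity), cos_two_mul]
  linear_combination 2 * (T ^ 2 + 1) * (cos θ + T * sin θ) * h + 2 * T ^ 2 * hsum

/-- Solving the Eriksson-type perimeter formula for the angle ψ: the basis for
the angle-coordinate parametrization of spherical triangles with perimeter ≤ τ. -/
theorem angle_coordinates_cos_psi (τ κ φ ψ : ℝ)
    (hφ0 : 0 < φ) (hφ1 : φ < π) (hψ0 : 0 < ψ) (hψ1 : ψ < π)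
    (hτ : Real.cos (τ / 2) ≠ 0) (hκ : Real.sin (τ / 2 - κ) ≠ 0)
    (h : Real.tan (τ / 2) *
        (Real.cos φ + Real.cos ψ - Real.cos φ * Real.cos ψ +
          Real.cos κ * Real.sin φ * Real.sin ψ - 1) =
      Real.sin φ * Real.sin ψ * Real.sin κ) :
    Real.cos ψ =
      ((Real.tan (φ / 2) * Real.sin (τ / 2) / Real.sin (τ / 2 - κ)) ^ 2 - 1) /
      ((Real.tan (φ / 2) * Real.sin (τ / 2) / Real.sin (τ / 2 - κ)) ^ 2 + 1) := by
  have hsinφ : 0 < sin (φ / 2) := sin_pos_of_pos_of_lt_pi (by linarith) (by linarith)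
  have hcosφ : 0 < cos (φ / 2) := cos_pos_of_mem_Ioo ⟨by linarith, by linarith⟩
  have hsinψ : 0 < sin (ψ / 2) := sin_pos_of_pos_of_lt_pi (by linarith) (by linarith)
  have hcleared : sin (τ / 2) * (cos φ + cos ψ - cos φ * cos ψ + cos κ * sin φ * sin ψ - 1)
      = sin φ * sin ψ * sin κ * cos (τ / 2) := by
    rwa [tan_eq_sin_div_cos, div_mul_eq_mul_div, div_eq_iff hτ] at h
  have hhalf : cos (φ / 2) * cos (ψ / 2) * sin (τ / 2 - κ)
      = sin (τ / 2) * sin (φ / 2) * sin (ψ / 2) := by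
    have hfactor := eriksson_half_angle_identity (τ / 2) κ φ ψ
    rw [hcleared, sub_self, eq_comm] at hfactor
    simpa [hsinφ.ne', hsinψ.ne', sub_eq_zero] using hfactor
  have hcotψ : cos (ψ / 2) = tan (φ / 2) * sin (τ / 2) / sin (τ / 2 - κ) * sin (ψ / 2) := by
    rw [div_mul_eq_mul_div, eq_div_iff hκ, tan_eq_sin_div_cos, div_mul_eq_mul_div,
      div_mul_eq_mul_div, eq_div_iff hcosφ.ne']
    linear_combination hhalf
  rw [← cos_two_mul_of_cos_eq_mul_sin hcotψ, mul_div_cancel₀ ψ two_ne_zero]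
end
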